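/- arXiv:math/0301073 — 2 statements merged into one kernel-verified Lean document; each statement's English description precedes it below -/
import Mathlib

section
/- Let n ≥ 1, let V ⊆ ℝ^{2n} be open, and let Z ⊂ V be nonempty and compact. Suppose H : ℝ^{2n} → ℝ is smooth, its support is a compact subset of V, min_Z H > 0, and X_H has no fast periodic orbit. Then for every C with 0 < C < min_Z H there exists K ∈ 𝓗(V,Z) such that C ≤ max K < min_Z H and X_K has no fast periodic orbit. -/
open scoped RealInnerProductSpace ENNReal NNReal Topology
open Metric Set

noncomputable section

/-- `ℝ^{2n}` identified with `ℂ^n`, with the standard (real) inner product and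
the standard complex structure `J` given by multiplication by `i`. -/
abbrev Esp (n : ℕ) := EuclideanSpace ℂ (Fin n)

variable {n : ℕ}

/-- The Hamiltonian vector field `X_H = J ∇H` of `H : ℝ^{2n} → ℝ`. -/
def hamVF (H : Esp n → ℝ) (x : Esp n) : Esp n := Complex.I • gradient H x

/-- A nonconstant `T`-periodic orbit of the Hamiltonian flow of `H`:
a nonconstant solution `γ` of `γ' = J∇H(γ)` with `γ (t + T) = γ t`. -/
def IsPeriodicOrbit (H : Esp n → ℝ) (γ : ℝ → Esp n) (T : ℝ) : Prop :=
  0 < T ∧ (∀ t, HasDerivAt γ (hamVF H (γ t)) t) ∧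
    (∀ t, γ (t + T) = γ t) ∧ ∃ t₀ t₁, γ t₀ ≠ γ t₁

/-- `H` has a fast (period `≤ 1`) nonconstant periodic orbit. -/
def HasFastOrbit (H : Esp n → ℝ) : Prop :=
  ∃ γ T, IsPeriodicOrbit H γ T ∧ T ≤ 1

/-- The symplectic action of a `1`-periodic loop `γ` with respect to the
(possibly time-dependent) Hamiltonian `H`:
`A_H(γ) = -(1/2)∫₀¹ ⟨Jγ(t), γ'(t)⟩ dt + ∫₀¹ H(t, γ(t)) dt`. -/
def action (H : ℝ → Esp n → ℝ) (γ : ℝ → Esp n) : ℝ :=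
  -(1 / 2) * (∫ t in (0:ℝ)..1, ⟪(Complex.I • γ t : Esp n), deriv γ t⟫) +
    ∫ t in (0:ℝ)..1, H t (γ t)

/-- The class `𝓗(V, Z)`: smooth functions on `ℝ^{2n}` with compact support
contained in `V`, constant on a neighborhood of `Z`, whose value on `Z` is the
maximum of `H`. -/
def InHclass (V Z : Set (Esp n)) (H : Esp n → ℝ) : Prop :=
  ContDiff ℝ (⊤ : ℕ∞) H ∧ IsCompact (tsupport H) ∧ tsupport H ⊆ V ∧
    (∃ U, IsOpen U ∧ Z ⊆ U ∧ ∃ c : ℝ, ∀ x ∈ U, H x = c) ∧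
    ∀ z ∈ Z, ∀ x, H x ≤ H z

/-- The relative Hofer–Zehnder capacity `c_HZ(V, Z)`: the supremum of `max H`
over all `H ∈ 𝓗(V, Z)` having no fast nonconstant periodic orbit (for `z ∈ Z`,
`H z = max H`). -/
def relCap (V Z : Set (Esp n)) : ℝ≥0∞ :=
  sSup {c | ∃ H, InHclass V Z H ∧ ¬ HasFastOrbit H ∧
    ∃ z ∈ Z, c = ENNReal.ofReal (H z)}

/-!
Take `K = f ∘ H` for a smooth nondecreasing `f` with `f 0 = 0`, `0 ≤ f' ≤ 1` and `f ≡ C` above a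
level `c ∈ (C, min_Z H)`; `f` is the primitive of a bump function of total mass `C` supported in
`(0, c)`. Since `X_{f ∘ H} = f'(H) X_H` and `H` is conserved along such trajectories, a `T`-periodic
orbit of `K` is an orbit of `H` run at the constant speed `λ = f'(H) ∈ [0, 1]`; nonconstancy
forces `λ ≠ 0`, and then its period for `H` is `λ T ≤ T`.
-/

lemma exists_bump_integral_eq {C c : ℝ} (hC : 0 < C) (hCc : C < c) :
    ∃ φ : ℝ → ℝ, ContDiff ℝ (⊤ : ℕ∞) φ ∧ Function.support φ ⊆ Ioo 0 c ∧
      (∀ s, φ s ∈ Icc 0 1) ∧ ∫ s, φ s = C := by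
  let b : ContDiffBump (c / 2) := ⟨C / 2, c / 2, by positivity, by linarith⟩
  have hb : C ≤ ∫ s, b s := by
    have := b.measure_closedBall_le_integral MeasureTheory.volume
    rwa [Real.volume_real_closedBall (by positivity), mul_div_cancel₀ _ two_ne_zero] at this
  have hb0 : 0 < ∫ s, b s := hC.trans_le hb
  have ha : C / ∫ s, b s ∈ Icc 0 1 := ⟨by positivity, (div_le_one hb0).2 hb⟩
  refine ⟨fun s => C / (∫ s, b s) * b s, contDiff_const.mul b.contDiff, ?_, ?_, ?_⟩
  · refine (Function.support_mul_subset_right _ _).trans ?_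
    rw [b.support_eq, Real.ball_eq_Ioo, show b.rOut = c / 2 from rfl, sub_self, add_halves]
  · exact fun s => ⟨mul_nonneg ha.1 b.nonneg, mul_le_one₀ ha.2 b.nonneg b.le_one⟩
  · rw [MeasureTheory.integral_const_mul, div_mul_cancel₀ _ hb0.ne']

lemma exists_smooth_cutoff {C c : ℝ} (hC : 0 < C) (hCc : C < c) :
    ∃ f f' : ℝ → ℝ, ContDiff ℝ (⊤ : ℕ∞) f ∧ (∀ s, HasDerivAt f (f' s) s) ∧
      (∀ s, f' s ∈ Icc 0 1) ∧ f 0 = 0 ∧ (∀ s, c ≤ s → f s = C) ∧ ∀ s, f s ≤ C := by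
  obtain ⟨φ, hφ, hsupp, hφ01, hint⟩ := exists_bump_integral_eq hC hCc
  set f : ℝ → ℝ := fun s => ∫ t in (0 : ℝ)..s, φ t
  have hf : ∀ s, HasDerivAt f (φ s) s := fun s =>
    (hφ.continuous.integral_hasStrictDerivAt 0 s).hasDerivAt
  have hf_smooth : ContDiff ℝ (⊤ : ℕ∞) f := by
    refine contDiff_infty_iff_deriv.2 ⟨fun s => (hf s).differentiableAt, ?_⟩
    rwa [show deriv f = φ from funext fun s => (hf s).deriv]
  have hfC : ∀ s, c ≤ s → f s = C := fun s hs => by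
    rw [← hint]
    exact intervalIntegral.integral_eq_integral_of_support_subset
      (hsupp.trans (Ioo_subset_Ioc_self.trans (Ioc_subset_Ioc_right hs)))
  have hmono : Monotone f := monotone_of_hasDerivAt_nonneg hf fun s => (hφ01 s).1
  refine ⟨f, φ, hf_smooth, hf, hφ01, intervalIntegral.integral_same, hfC, fun s => ?_⟩
  calc f s ≤ f (max s c) := hmono (le_max_left s c)
    _ = C := hfC _ (le_max_right s c)

lemma inner_gradient_hamVF (H : Esp n → ℝ) (x : Esp n) : ⟪gradient H x, hamVF H x⟫ = 0 := by
  rw [hamVF, PiLp.inner_apply]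
  exact Finset.sum_eq_zero fun i _ => real_inner_I_smul_self ℂ _

lemma hamVF_comp {H : Esp n → ℝ} (hH : Differentiable ℝ H) {f f' : ℝ → ℝ}
    (hf : ∀ s, HasDerivAt f (f' s) s) (x : Esp n) :
    hamVF (f ∘ H) x = f' (H x) • hamVF H x := by
  have hfH : HasFDerivAt (f ∘ H) (f' (H x) • fderiv ℝ H x) x :=
    (hf (H x)).comp_hasFDerivAt x (hH x).hasFDerivAt
  rw [hamVF, hamVF, gradient, gradient, hfH.fderiv, map_smul, smul_comm]

lemma hamiltonian_eq_of_hasDerivAt_smul_hamVF {H : Esp n → ℝ} (hH : Differentiable ℝ H)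
    {γ : ℝ → Esp n} {c : ℝ → ℝ} (hγ : ∀ t, HasDerivAt γ (c t • hamVF H (γ t)) t) (s t : ℝ) :
    H (γ s) = H (γ t) := by
  have hHγ : ∀ t, HasDerivAt (H ∘ γ) 0 t := fun t => by
    have h := (hH (γ t)).hasFDerivAt.comp_hasDerivAt t (hγ t)
    rwa [map_smul, ← toDual_gradient, InnerProductSpace.toDual_apply_apply,
      inner_gradient_hamVF, smul_zero] at h
  exact is_const_of_deriv_eq_zero (fun t => (hHγ t).differentiableAt) (fun t => (hHγ t).deriv) s t

lemma isPeriodicOrbit_comp_const_inv_mul {H : Esp n → ℝ} {γ : ℝ → Esp n} {lam T : ℝ}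
    (hlam : lam ≠ 0) (hT : 0 < T) (hγ : ∀ t, HasDerivAt γ (lam • hamVF H (γ t)) t)
    (hper : Function.Periodic γ T) (hne : ∃ t₀ t₁, γ t₀ ≠ γ t₁) :
    IsPeriodicOrbit H (fun t => γ (lam⁻¹ * t)) (|lam| * T) := by
  refine ⟨mul_pos (abs_pos.2 hlam) hT, fun t => ?_, ?_, ?_⟩
  · have h := (hγ (lam⁻¹ * t)).scomp t ((hasDerivAt_id t).const_mul lam⁻¹)
    rwa [mul_one, smul_smul, inv_mul_cancel₀ hlam, one_smul] at h
  · show Function.Periodic (fun t => γ (lam⁻¹ * t)) (|lam| * T)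
    rcases abs_choice lam with h | h <;> rw [h]
    · exact hper.const_inv_mul lam
    · simpa only [neg_mul] using (hper.const_inv_mul lam).neg
  · obtain ⟨t₀, t₁, h⟩ := hne
    exact ⟨lam * t₀, lam * t₁, by simpa only [inv_mul_cancel_left₀ hlam] using h⟩

lemma not_hasFastOrbit_comp {H : Esp n → ℝ} (hH : Differentiable ℝ H) {f f' : ℝ → ℝ}
    (hf : ∀ s, HasDerivAt f (f' s) s) (hf' : ∀ s, |f' s| ≤ 1) (hno : ¬ HasFastOrbit H) :
    ¬ HasFastOrbit (f ∘ H) := by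
  rintro ⟨γ, T, ⟨hT, hγ, hper, hne⟩, hT1⟩
  simp only [hamVF_comp hH hf] at hγ
  set lam := f' (H (γ 0))
  have hγlam : ∀ t, HasDerivAt γ (lam • hamVF H (γ t)) t := fun t => by
    simpa only [hamiltonian_eq_of_hasDerivAt_smul_hamVF hH hγ t 0] using hγ t
  by_cases hlam : lam = 0
  · obtain ⟨t₀, t₁, h⟩ := hne
    simp only [hlam, zero_smul] at hγlam
    exact h (is_const_of_deriv_eq_zero (fun t => (hγlam t).differentiableAt)
      (fun t => (hγlam t).deriv) t₀ t₁)
  · exact hno ⟨_, _, isPeriodicOrbit_comp_const_inv_mul hlam hT hγlam hper hne,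
      by nlinarith [hf' (H (γ 0))]⟩

lemma inHclass_comp {V Z : Set (Esp n)} {H : Esp n → ℝ} (hH : ContDiff ℝ (⊤ : ℕ∞) H)
    (hH_cpt : IsCompact (tsupport H)) (hH_V : tsupport H ⊆ V) {f : ℝ → ℝ} {c C : ℝ}
    (hf : ContDiff ℝ (⊤ : ℕ∞) f) (hf0 : f 0 = 0) (hfC : ∀ s, c ≤ s → f s = C)
    (hf_le : ∀ s, f s ≤ C) (hHZ : ∀ z ∈ Z, c < H z) : InHclass V Z (f ∘ H) := by
  have hsupp : tsupport (f ∘ H) ⊆ tsupport H := tsupport_comp_subset hf0 H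
  refine ⟨hf.comp hH, hH_cpt.of_isClosed_subset (isClosed_tsupport _) hsupp, hsupp.trans hH_V,
    ⟨H ⁻¹' Ioi c, isOpen_Ioi.preimage hH.continuous, hHZ, C, fun x hx => hfC _ hx.le⟩,
    fun z hz x => ?_⟩
  rw [Function.comp_apply, Function.comp_apply, hfC _ (hHZ z hz).le]
  exact hf_le _

theorem stmt_12_general (n : ℕ) (V Z : Set (Esp n))
    (hZcpt : IsCompact Z)
    (H : Esp n → ℝ) (hsm : ContDiff ℝ (⊤ : ℕ∞) H)
    (hsupp_cpt : IsCompact (tsupport H)) (hsupp : tsupport H ⊆ V)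
    (hnofast : ¬ HasFastOrbit H)
    (C : ℝ) (hC0 : 0 < C) (hC : C < sInf (H '' Z)) :
    ∃ K : Esp n → ℝ, InHclass V Z K ∧ ¬ HasFastOrbit K ∧
      ∀ z ∈ Z, C ≤ K z ∧ K z < sInf (H '' Z) := by
  obtain ⟨c, hCc, hc⟩ := exists_between hC
  obtain ⟨f, f', hf, hf', hf'01, hf0, hfC, hf_le⟩ := exists_smooth_cutoff hC0 hCc
  have hHZ : ∀ z ∈ Z, c < H z := fun z hz =>
    hc.trans_le (csInf_le (hZcpt.image hsm.continuous).bddBelow (mem_image_of_mem H hz))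
  refine ⟨f ∘ H, inHclass_comp hsm hsupp_cpt hsupp hf hf0 hfC hf_le hHZ,
    not_hasFastOrbit_comp (hsm.differentiable (by simp)) hf'
      (fun s => (abs_of_nonneg (hf'01 s).1).trans_le (hf'01 s).2) hnofast, fun z hz => ?_⟩
  rw [Function.comp_apply, hfC _ (hHZ z hz).le]
  exact ⟨le_rfl, hC⟩

/-- **Cutoff lemma (Lemma 5.1 of Ginzburg–Gürel)** for open subsets of standard
`ℝ^{2n}`: if `H` is smooth with compact support in `V`, `min_Z H > 0`, and the
flow of `H` has no fast nonconstant periodic orbit, then for any `C` with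
`0 < C < min_Z H` there is `K ∈ 𝓗(V, Z)` with `C ≤ max K < min_Z H` whose flow
has no fast nonconstant periodic orbit (for `z ∈ Z`, `K z = max K`). -/
theorem stmt_12 (n : ℕ) (hn : 1 ≤ n) (V Z : Set (Esp n)) (hV : IsOpen V)
    (hZcpt : IsCompact Z) (hZne : Z.Nonempty) (hZV : Z ⊆ V)
    (H : Esp n → ℝ) (hsm : ContDiff ℝ (⊤ : ℕ∞) H)
    (hsupp_cpt : IsCompact (tsupport H)) (hsupp : tsupport H ⊆ V)
    (hminpos : 0 < sInf (H '' Z))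
    (hnofast : ¬ HasFastOrbit H)
    (C : ℝ) (hC0 : 0 < C) (hC : C < sInf (H '' Z)) :
    ∃ K : Esp n → ℝ, InHclass V Z K ∧ ¬ HasFastOrbit K ∧
      ∀ z ∈ Z, C ≤ K z ∧ K z < sInf (H '' Z) :=
  stmt_12_general n V Z hZcpt H hsm hsupp_cpt hsupp hnofast C hC0 hC
end
end

section
/- Let n ≥ 1 and let F : ℝ^{2n} → ℝ be a smooth proper function. Suppose ε₀ > 0 is such that every c ∈ [−ε₀, ε₀] is a regular value of F and the sublevel set U_ε = F⁻¹((−∞, ε)) is nonempty and bounded for every ε ∈ [−ε₀, ε₀]. Assume that the compact hypersurface S = F⁻¹(0) has relative Lipschitz type, i.e., limsup_{ε → 0+} c_HZ(U_ε, Ū₀)/ε < ∞, where Ū₀ is the closure of U₀ = F⁻¹((−∞,0)). Then S carries a closed characteristic: there exists a nonconstant periodic solution γ of γ'(t) = J∇F(γ(t)) whose image is contained in S. -/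
/-! For small `ε`, the bound `c_HZ(U_ε, Ū₀) < R ε` forces the Hamiltonian `f ∘ F` to have a fast
periodic orbit, where `f` equals `R ε` below `ε/3`, vanishes above `2ε/3`, and has `|f'|` bounded
independently of `ε`. That orbit lies on a level `F = c` with `c ∈ [ε/3, 2ε/3]`, and reparametrized
by `f'(c)` it is a closed orbit of `X_F` whose period is bounded independently of `ε`; an iterate
has period in a fixed interval `[P, 2P]`. As `ε → 0`, compactness of `F⁻¹[-ε₀, ε₀]` and Gronwall's
estimate for a Lipschitz cutoff of `X_F` give a limiting closed orbit on `S` with period in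
`[P, 2P]`, nonconstant because `S` is a regular level.
-/

open scoped RealInnerProductSpace ENNReal NNReal Topology
open Metric Set

noncomputable section

variable {n : ℕ}

open Filter Function

section ODE

variable {E : Type*} [NormedAddCommGroup E] [NormedSpace ℝ E] {Y : E → E} {L : ℝ≥0}

theorem dist_le_of_hasDerivAt_lipschitz_of_nonneg (hY : LipschitzWith L Y) {f g : ℝ → E}
    (hf : ∀ t, HasDerivAt f (Y (f t)) t) (hg : ∀ t, HasDerivAt g (Y (g t)) t)
    {t : ℝ} (ht : 0 ≤ t) : dist (f t) (g t) ≤ dist (f 0) (g 0) * Real.exp (L * t) := by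
  have hfc : Continuous f := continuous_iff_continuousAt.2 fun s => (hf s).continuousAt
  have hgc : Continuous g := continuous_iff_continuousAt.2 fun s => (hg s).continuousAt
  simpa using dist_le_of_trajectories_ODE (v := fun _ => Y) (fun _ => hY) hfc.continuousOn
    (fun s _ => (hf s).hasDerivWithinAt) hgc.continuousOn (fun s _ => (hg s).hasDerivWithinAt)
    le_rfl t ⟨ht, le_rfl⟩

theorem dist_le_of_hasDerivAt_lipschitz (hY : LipschitzWith L Y) {f g : ℝ → E}
    (hf : ∀ t, HasDerivAt f (Y (f t)) t) (hg : ∀ t, HasDerivAt g (Y (g t)) t) (t : ℝ) :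
    dist (f t) (g t) ≤ dist (f 0) (g 0) * Real.exp (L * |t|) := by
  rcases le_or_gt 0 t with ht | ht
  · simpa [abs_of_nonneg ht] using dist_le_of_hasDerivAt_lipschitz_of_nonneg hY hf hg ht
  · have hrev : ∀ {h : ℝ → E}, (∀ t, HasDerivAt h (Y (h t)) t) →
        ∀ t, HasDerivAt (fun s => h (-s)) ((-Y) (h (-t))) t := fun hh t => by
      simpa [comp_def] using (hh (-t)).scomp t (hasDerivAt_neg t)
    simpa [abs_of_neg ht] using dist_le_of_hasDerivAt_lipschitz_of_nonneg (Y := -Y)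
      (fun x y => by simpa [edist_neg_neg] using hY x y) (hrev hf) (hrev hg) (neg_nonneg.2 ht.le)

theorem exists_tendsto_solution_of_lipschitz [CompleteSpace E] (hY : LipschitzWith L Y)
    {σ : ℕ → ℝ → E} (hσ : ∀ k t, HasDerivAt (σ k) (Y (σ k t)) t) {p : E}
    (hp : Tendsto (fun k => σ k 0) atTop (𝓝 p)) :
    ∃ γ : ℝ → E, (∀ t, HasDerivAt γ (Y (γ t)) t) ∧
      ∀ t, Tendsto (fun k => σ k t) atTop (𝓝 (γ t)) := by
  have hcauchy : ∀ t, CauchySeq fun k => σ k t := fun t => by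
    refine Metric.cauchySeq_iff.2 fun ε hε => ?_
    obtain ⟨N, hN⟩ := Metric.cauchySeq_iff.1 hp.cauchySeq (ε / Real.exp (L * |t|)) (by positivity)
    refine ⟨N, fun i hi j hj => ?_⟩
    calc dist (σ i t) (σ j t) ≤ dist (σ i 0) (σ j 0) * Real.exp (L * |t|) :=
          dist_le_of_hasDerivAt_lipschitz hY (hσ i) (hσ j) t
      _ < ε / Real.exp (L * |t|) * Real.exp (L * |t|) := by gcongr; exact hN i hi j hj
      _ = ε := div_mul_cancel₀ _ (Real.exp_pos _).ne'
  choose γ hγ using fun t => cauchySeq_tendsto_of_complete (hcauchy t)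
  have hdist : ∀ k t, dist (σ k t) (γ t) ≤ dist (σ k 0) p * Real.exp (L * |t|) := fun k t =>
    le_of_tendsto_of_tendsto' (tendsto_const_nhds.dist (hγ t))
      ((tendsto_const_nhds.dist hp).mul_const _)
      fun i => dist_le_of_hasDerivAt_lipschitz hY (hσ k) (hσ i) t
  refine ⟨γ, fun t => ?_, hγ⟩
  have hbound :
      Tendsto (fun k => L * (dist (σ k 0) p * Real.exp (L * (|t| + 1)))) atTop (𝓝 0) := by
    simpa using ((tendsto_iff_dist_tendsto_zero.1 hp).mul_const _).const_mul (L : ℝ)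
  have hunif : TendstoUniformlyOn (fun k s => Y (σ k s)) (fun s => Y (γ s)) atTop (ball t 1) := by
    refine Metric.tendstoUniformlyOn_iff.2 fun ε hε => ?_
    filter_upwards [hbound.eventually (gt_mem_nhds hε)] with k hk s hs
    have hst : |s| ≤ |t| + 1 := by
      have := abs_sub_abs_le_abs_sub s t
      rw [mem_ball, Real.dist_eq] at hs
      linarith
    calc dist (Y (γ s)) (Y (σ k s)) ≤ L * dist (σ k s) (γ s) := by
          rw [dist_comm]; exact hY.dist_le_mul _ _
      _ ≤ L * (dist (σ k 0) p * Real.exp (L * (|t| + 1))) := by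
          gcongr; exact (hdist k s).trans (by gcongr)
      _ < ε := hk
  exact hasDerivAt_of_tendstoUniformlyOn isOpen_ball hunif
    (Eventually.of_forall fun k s _ => hσ k s) (fun s _ => hγ s) (mem_ball_self one_pos)

theorem lipschitzWith_of_hasDerivAt_of_norm_le {M : ℝ≥0} (hY : ∀ x, ‖Y x‖ ≤ M) {f : ℝ → E}
    (hf : ∀ t, HasDerivAt f (Y (f t)) t) : LipschitzWith M f :=
  lipschitzWith_of_nnnorm_deriv_le (fun t => (hf t).differentiableAt) fun t => by
    rw [(hf t).deriv, ← NNReal.coe_le_coe, coe_nnnorm]; exact hY _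

end ODE

theorem Function.Periodic.of_tendsto {X : Type*} [MetricSpace X] {σ : ℕ → ℝ → X} {γ : ℝ → X}
    {T : ℕ → ℝ} {T₀ : ℝ} {M : ℝ≥0} (hσ : ∀ k, LipschitzWith M (σ k))
    (hper : ∀ k, Periodic (σ k) (T k)) (hT : Tendsto T atTop (𝓝 T₀))
    (hlim : ∀ t, Tendsto (fun k => σ k t) atTop (𝓝 (γ t))) : Periodic γ T₀ := fun t => by
  refine tendsto_nhds_unique (hlim (t + T₀)) (tendsto_iff_dist_tendsto_zero.2 ?_)
  have hbound : ∀ k, dist (σ k (t + T₀)) (γ t) ≤ M * dist T₀ (T k) + dist (σ k t) (γ t) :=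
    fun k => calc
      dist (σ k (t + T₀)) (γ t) ≤ dist (σ k (t + T₀)) (σ k (t + T k)) + dist (σ k t) (γ t) := by
        rw [hper k t]; exact dist_triangle _ _ _
      _ ≤ M * dist T₀ (T k) + dist (σ k t) (γ t) := by
        gcongr; simpa using (hσ k).dist_le_mul (t + T₀) (t + T k)
  refine squeeze_zero (fun _ => dist_nonneg) hbound ?_
  simpa using (((tendsto_const_nhds (x := T₀)).dist hT).const_mul (M : ℝ)).add
    (tendsto_iff_dist_tendsto_zero.1 (hlim t))

section FiniteDimensional

variable {E : Type*} [NormedAddCommGroup E] [NormedSpace ℝ E] [FiniteDimensional ℝ E]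

theorem exists_lipschitzWith_bounded_eqOn {X : E → E} (hX : ContDiff ℝ 1 X) {K : Set E}
    (hK : IsCompact K) :
    ∃ (Y : E → E) (L M : ℝ≥0), LipschitzWith L Y ∧ (∀ x, ‖Y x‖ ≤ M) ∧ EqOn Y X K := by
  obtain ⟨r, hr⟩ := hK.isBounded.subset_closedBall 0
  let χ : ContDiffBump (0 : E) := ⟨max r 0 + 1, max r 0 + 2, by positivity, by linarith⟩
  have hYc : HasCompactSupport fun x => χ x • X x := χ.hasCompactSupport.smul_right
  have hYs : ContDiff ℝ 1 fun x => χ x • X x := χ.contDiff.smul hX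
  obtain ⟨L, hL⟩ := hYs.lipschitzWith_of_hasCompactSupport hYc one_ne_zero
  obtain ⟨M, hM⟩ := hYs.continuous.bounded_above_of_compact_support hYc
  refine ⟨_, L, M.toNNReal, hL, fun x => (hM x).trans (Real.le_coe_toNNReal M), fun x hx => ?_⟩
  have hxχ : x ∈ closedBall (0 : E) χ.rIn :=
    closedBall_subset_closedBall (by simp only [χ]; linarith [le_max_left r 0]) (hr hx)
  simp [χ.one_of_mem_closedBall hxχ]

theorem exists_periodic_limit_of_periodic_solutions {X : E → E} (hX : ContDiff ℝ 1 X)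
    {K : Set E} (hK : IsCompact K) {σ : ℕ → ℝ → E} {T : ℕ → ℝ} {a b : ℝ}
    (hσ : ∀ k t, HasDerivAt (σ k) (X (σ k t)) t) (hσK : ∀ k t, σ k t ∈ K)
    (hper : ∀ k, Periodic (σ k) (T k)) (hT : ∀ k, T k ∈ Icc a b) :
    ∃ (γ : ℝ → E) (T₀ : ℝ) (φ : ℕ → ℕ), Tendsto φ atTop atTop ∧
      (∀ t, HasDerivAt γ (X (γ t)) t) ∧ Periodic γ T₀ ∧ T₀ ∈ Icc a b ∧
      ∀ t, Tendsto (fun j => σ (φ j) t) atTop (𝓝 (γ t)) := by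
  obtain ⟨Y, L, M, hYL, hYM, hYX⟩ := exists_lipschitzWith_bounded_eqOn hX hK
  have hσY : ∀ k t, HasDerivAt (σ k) (Y (σ k t)) t := fun k t => by
    rw [hYX (hσK k t)]; exact hσ k t
  obtain ⟨⟨p, T₀⟩, ⟨-, hT₀⟩, φ, hφ, hlim⟩ :=
    (hK.prod isCompact_Icc).tendsto_subseq (x := fun k => (σ k 0, T k)) fun k => ⟨hσK k 0, hT k⟩
  rw [nhds_prod_eq, tendsto_prod_iff'] at hlim
  obtain ⟨γ, hγ, hγlim⟩ := exists_tendsto_solution_of_lipschitz hYL (fun j => hσY (φ j)) hlim.1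
  have hγK : ∀ t, γ t ∈ K := fun t =>
    hK.isClosed.mem_of_tendsto (hγlim t) (Eventually.of_forall fun j => hσK _ t)
  refine ⟨γ, T₀, φ, hφ.tendsto_atTop, fun t => ?_,
    .of_tendsto (fun j => lipschitzWith_of_hasDerivAt_of_norm_le hYM (hσY (φ j)))
      (fun j => hper (φ j)) hlim.2 hγlim, hT₀, hγlim⟩
  rw [← hYX (hγK t)]; exact hγ t

end FiniteDimensional

theorem inner_I_smul_self (x : Esp n) : ⟪x, (Complex.I • x : Esp n)⟫ = 0 := by
  simp [PiLp.inner_apply, mul_comm]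

theorem fderiv_apply_hamVF_self (F : Esp n → ℝ) (x : Esp n) :
    fderiv ℝ F x (hamVF F x) = 0 := by
  rw [← inner_gradient_left, hamVF, inner_I_smul_self]

theorem contDiff_hamVF {F : Esp n → ℝ} (hF : ContDiff ℝ 2 F) : ContDiff ℝ 1 (hamVF F) :=
  ((InnerProductSpace.toDual ℝ (Esp n)).symm.contDiff.comp
    (hF.fderiv_right (by norm_num))).const_smul Complex.I

theorem hamVF_comp_s16 {f : ℝ → ℝ} {F : Esp n → ℝ} {x : Esp n}
    (hf : DifferentiableAt ℝ f (F x)) (hF : DifferentiableAt ℝ F x) :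
    hamVF (f ∘ F) x = deriv f (F x) • hamVF F x := by
  have hfF : HasFDerivAt (f ∘ F) (deriv f (F x) • fderiv ℝ F x) x :=
    hf.hasDerivAt.comp_hasFDerivAt x hF.hasFDerivAt
  rw [hamVF, hamVF, gradient, hfF.fderiv, map_smul, gradient, smul_comm]

theorem exists_ne_of_hasDerivAt_hamVF {F : Esp n → ℝ} {γ : ℝ → Esp n}
    (hγ : ∀ t, HasDerivAt γ (hamVF F (γ t)) t) (hreg : gradient F (γ 0) ≠ 0) :
    ∃ t₀ t₁, γ t₀ ≠ γ t₁ := by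
  by_contra! hconst
  have hzero : HasDerivAt γ 0 0 := by
    rw [show γ = fun _ => γ 0 from funext fun t => hconst t 0]; exact hasDerivAt_const 0 (γ 0)
  exact smul_ne_zero Complex.I_ne_zero hreg ((hγ 0).unique hzero)

theorem exists_periodicOrbit_of_comp {f : ℝ → ℝ} {F : Esp n → ℝ} {γ : ℝ → Esp n} {T : ℝ}
    (hf : Differentiable ℝ f) (hF : Differentiable ℝ F) (hγ : IsPeriodicOrbit (f ∘ F) γ T) :
    ∃ σ c, deriv f c ≠ 0 ∧ IsPeriodicOrbit F σ (|deriv f c| * T) ∧ ∀ t, F (σ t) = c := by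
  obtain ⟨hT, hγ', hper, t₀, t₁, hne⟩ := hγ
  replace hper : Periodic γ T := hper
  have hlevel : ∀ t, F (γ t) = F (γ 0) := by
    have hder : ∀ t, HasDerivAt (F ∘ γ) 0 t := fun t => by
      simpa [hamVF_comp_s16 (hf _) (hF _), fderiv_apply_hamVF_self] using
        (hF (γ t)).hasFDerivAt.comp_hasDerivAt t (hγ' t)
    exact fun t => is_const_of_deriv_eq_zero (fun s => (hder s).differentiableAt)
      (fun s => (hder s).deriv) t 0
  set d := deriv f (F (γ 0))
  have hγd : ∀ t, HasDerivAt γ (d • hamVF F (γ t)) t := fun t => by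
    simpa [hamVF_comp_s16 (hf _) (hF _), hlevel t] using hγ' t
  have hd : d ≠ 0 := fun hd => hne <| is_const_of_deriv_eq_zero
    (fun s => (hγd s).differentiableAt) (fun s => by simpa [hd] using (hγd s).deriv) t₀ t₁
  have hσ : ∀ t, HasDerivAt (fun s => γ (s / d)) (hamVF F (γ (t / d))) t := fun t => by
    simpa [comp_def, smul_smul, hd] using (hγd (t / d)).scomp t ((hasDerivAt_id t).div_const d)
  have hσper : Periodic (fun s => γ (s / d)) (|d| * T) := by
    rcases abs_choice d with h | h <;> rw [h]
    · simpa [mul_comm] using hper.div_const d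
    · simpa [mul_comm] using (hper.div_const d).neg
  refine ⟨fun s => γ (s / d), F (γ 0), hd, ⟨by positivity, hσ, hσper, t₀ * d, t₁ * d, ?_⟩,
    fun t => hlevel _⟩
  simpa [hd] using hne

theorem deriv_eq_zero_of_eventually_eq {f : ℝ → ℝ} {x c : ℝ} (h : ∀ᶠ y in 𝓝 x, f y = c) :
    deriv f x = 0 :=
  Filter.EventuallyEq.deriv_eq (f := fun _ => c) h |>.trans (deriv_const x c)

theorem deriv_smoothTransition_eq_zero {y : ℝ} (hy : y ∉ Icc (0 : ℝ) 1) :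
    deriv Real.smoothTransition y = 0 := by
  rcases not_and_or.1 hy with h | h <;> push Not at h
  · exact deriv_eq_zero_of_eventually_eq ((eventually_lt_nhds h).mono fun z hz =>
      Real.smoothTransition.zero_of_nonpos hz.le)
  · exact deriv_eq_zero_of_eventually_eq ((eventually_gt_nhds h).mono fun z hz =>
      Real.smoothTransition.one_of_one_le hz.le)

theorem exists_abs_deriv_smoothTransition_le :
    ∃ B, ∀ y, |deriv Real.smoothTransition y| ≤ B := by
  have hcont : Continuous (deriv Real.smoothTransition) :=
    (Real.smoothTransition.contDiff (n := 2)).continuous_deriv (by norm_num)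
  simpa using hcont.bounded_above_of_compact_support
    (.intro isCompact_Icc fun _ => deriv_smoothTransition_eq_zero)

def levelCutoff (ε c s : ℝ) : ℝ := c * Real.smoothTransition (2 - 3 * s / ε)

section levelCutoff

variable {ε c s : ℝ}

theorem contDiff_levelCutoff : ContDiff ℝ (⊤ : ℕ∞) (levelCutoff ε c) :=
  contDiff_const.mul (Real.smoothTransition.contDiff.comp (by fun_prop))

theorem levelCutoff_of_le (hε : 0 < ε) (hs : s ≤ ε / 3) : levelCutoff ε c s = c := by
  rw [levelCutoff, Real.smoothTransition.one_of_one_le, mul_one]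
  rw [le_sub_comm, div_le_iff₀ hε]; linarith

theorem levelCutoff_of_ge (hε : 0 < ε) (hs : 2 * ε / 3 ≤ s) : levelCutoff ε c s = 0 := by
  rw [levelCutoff, Real.smoothTransition.zero_of_nonpos, mul_zero]
  rw [sub_nonpos, le_div_iff₀ hε]; linarith

theorem levelCutoff_le (hc : 0 ≤ c) : levelCutoff ε c s ≤ c :=
  mul_le_of_le_one_right hc (Real.smoothTransition.le_one _)

theorem mem_Icc_of_deriv_levelCutoff_ne_zero (hε : 0 < ε) (hs : deriv (levelCutoff ε c) s ≠ 0) :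
    s ∈ Icc (ε / 3) (2 * ε / 3) := by
  by_contra hs'
  rcases not_and_or.1 hs' with h | h <;> push Not at h
  · exact hs (deriv_eq_zero_of_eventually_eq ((eventually_lt_nhds h).mono fun z hz =>
      levelCutoff_of_le hε hz.le))
  · exact hs (deriv_eq_zero_of_eventually_eq ((eventually_gt_nhds h).mono fun z hz =>
      levelCutoff_of_ge hε hz.le))

theorem abs_deriv_levelCutoff_le {B : ℝ} (hB : ∀ y, |deriv Real.smoothTransition y| ≤ B)
    (hε : 0 < ε) (hc : 0 ≤ c) : |deriv (levelCutoff ε c) s| ≤ 3 * B * c / ε := by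
  have hder : HasDerivAt (levelCutoff ε c)
      (c * (deriv Real.smoothTransition (2 - 3 * s / ε) * -(3 / ε))) s := by
    have hinner : HasDerivAt (fun s => 2 - 3 * s / ε) (-(3 / ε)) s := by
      simpa using ((hasDerivAt_id s).const_mul 3).div_const ε |>.const_sub 2
    exact ((Real.smoothTransition.contDiff (n := 1)).differentiable one_ne_zero
      _).hasDerivAt.comp s hinner |>.const_mul c
  rw [hder.deriv, abs_mul, abs_mul, abs_neg, abs_of_nonneg hc, abs_of_pos (div_pos three_pos hε)]
  calc c * (|deriv Real.smoothTransition (2 - 3 * s / ε)| * (3 / ε)) ≤ c * (B * (3 / ε)) := by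
        gcongr; exact hB _
    _ = 3 * B * c / ε := by ring

end levelCutoff

theorem hasFastOrbit_of_relCap_lt {V Z : Set (Esp n)} {H : Esp n → ℝ} {z : Esp n}
    (hH : InHclass V Z H) (hz : z ∈ Z) (hcap : relCap V Z < ENNReal.ofReal (H z)) :
    HasFastOrbit H := by
  by_contra hH'
  exact hcap.not_ge (le_sSup ⟨H, hH, hH', z, hz, rfl⟩)

theorem levelCutoff_comp_mem_Hclass {F : Esp n → ℝ} (hF : ContDiff ℝ (⊤ : ℕ∞) F) {ε c : ℝ}
    (hε : 0 < ε) (hc : 0 ≤ c) (hbdd : Bornology.IsBounded (F ⁻¹' Iio ε)) :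
    InHclass (F ⁻¹' Iio ε) (closure (F ⁻¹' Iio 0)) (levelCutoff ε c ∘ F) := by
  have hsupp : tsupport (levelCutoff ε c ∘ F) ⊆ F ⁻¹' Iio ε := by
    refine (closure_minimal (fun x hx => ?_) (isClosed_Iic.preimage hF.continuous)).trans
      (fun x (hx : F x ≤ 2 * ε / 3) => show F x < ε by linarith)
    by_contra hx'
    exact hx (levelCutoff_of_ge hε (le_of_lt (not_le.1 hx')))
  have hZ : closure (F ⁻¹' Iio 0) ⊆ F ⁻¹' Iio (ε / 3) :=
    (closure_minimal (fun x (hx : F x < 0) => hx.le) (isClosed_Iic.preimage hF.continuous)).trans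
      fun x (hx : F x ≤ 0) => show F x < ε / 3 by linarith
  have hconst : ∀ x ∈ F ⁻¹' Iio (ε / 3), (levelCutoff ε c ∘ F) x = c :=
    fun x hx => levelCutoff_of_le hε (le_of_lt hx)
  refine ⟨contDiff_levelCutoff.comp hF,
    isCompact_of_isClosed_isBounded (isClosed_tsupport _) (hbdd.subset hsupp), hsupp,
    ⟨_, isOpen_Iio.preimage hF.continuous, hZ, c, hconst⟩, fun z hz x => ?_⟩
  rw [hconst z (hZ hz)]
  exact levelCutoff_le hc

theorem exists_periodicOrbit_near_zero_level {F : Esp n → ℝ} (hF : ContDiff ℝ (⊤ : ℕ∞) F)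
    {ε R B : ℝ} (hε : 0 < ε) (hR : 0 ≤ R) (hB : ∀ y, |deriv Real.smoothTransition y| ≤ B)
    (hne : (F ⁻¹' Iio 0).Nonempty) (hbdd : Bornology.IsBounded (F ⁻¹' Iio ε))
    (hcap : relCap (F ⁻¹' Iio ε) (closure (F ⁻¹' Iio 0)) < ENNReal.ofReal (R * ε)) :
    ∃ σ T, IsPeriodicOrbit F σ T ∧ T ≤ 3 * B * R ∧ ∀ t, F (σ t) ∈ Icc (ε / 3) (2 * ε / 3) := by
  obtain ⟨z, hz⟩ := hne
  have hRε : 0 ≤ R * ε := by positivity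
  have hzmax : (levelCutoff ε (R * ε) ∘ F) z = R * ε :=
    levelCutoff_of_le hε (by linarith [show F z < 0 from hz])
  obtain ⟨γ, T, hγ, hT⟩ := hasFastOrbit_of_relCap_lt (levelCutoff_comp_mem_Hclass hF hε hRε hbdd)
    (subset_closure hz) (by rwa [hzmax])
  obtain ⟨σ, c, hc, hσ, hσc⟩ := exists_periodicOrbit_of_comp
    (contDiff_levelCutoff.differentiable (by simp)) (hF.differentiable (by simp)) hγ
  refine ⟨σ, _, hσ, ?_, fun t => hσc t ▸ mem_Icc_of_deriv_levelCutoff_ne_zero hε hc⟩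
  calc |deriv (levelCutoff ε (R * ε)) c| * T ≤ 3 * B * (R * ε) / ε * 1 :=
        mul_le_mul (abs_deriv_levelCutoff_le hB hε hRε) hT hγ.1.le
          ((abs_nonneg _).trans (abs_deriv_levelCutoff_le (s := c) hB hε hRε))
    _ = 3 * B * R := by field_simp

theorem exists_eventually_lt_ofReal_mul {f : ℝ → ℝ≥0∞}
    (hf : Filter.limsup (fun ε => f ε / ENNReal.ofReal ε) (𝓝[>] 0) < ⊤) :
    ∃ R, 0 ≤ R ∧ ∀ᶠ ε in 𝓝[>] 0, f ε < ENNReal.ofReal (R * ε) := by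
  obtain ⟨C, hlt, hC⟩ := exists_between hf
  refine ⟨C.toReal, ENNReal.toReal_nonneg, ?_⟩
  filter_upwards [eventually_lt_of_limsup_lt hlt, self_mem_nhdsWithin] with ε hε (hε0 : 0 < ε)
  rw [ENNReal.div_lt_iff (.inl (by simpa using hε0)) (.inl ENNReal.ofReal_ne_top)] at hε
  rwa [ENNReal.ofReal_mul ENNReal.toReal_nonneg, ENNReal.ofReal_toReal hC.ne]

theorem exists_nat_mul_mem_Ioc {T P : ℝ} (hT : 0 < T) (hTP : T ≤ P) :
    ∃ m : ℕ, (m : ℝ) * T ∈ Ioc P (2 * P) := by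
  refine ⟨⌊P / T⌋₊ + 1, ?_, ?_⟩
  · have := Nat.lt_floor_add_one (P / T)
    rw [div_lt_iff₀ hT] at this
    exact_mod_cast this
  · have := Nat.floor_le (div_nonneg (hT.le.trans hTP) hT.le)
    calc ((⌊P / T⌋₊ + 1 : ℕ) : ℝ) * T ≤ (P / T + 1) * T := by push_cast; gcongr
      _ = P + T := by field_simp
      _ ≤ 2 * P := by linarith

theorem stmt_16_general (n : ℕ) (F : Esp n → ℝ)
    (hsm : ContDiff ℝ (⊤ : ℕ∞) F)
    (hproper : ∀ s : Set ℝ, IsCompact s → IsCompact (F ⁻¹' s))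
    (ε₀ : ℝ) (hε₀ : 0 < ε₀)
    (hreg : ∀ c ∈ Icc (-ε₀) ε₀, ∀ x, F x = c → gradient F x ≠ 0)
    (hsub : ∀ ε ∈ Icc (-ε₀) ε₀, (F ⁻¹' Iio ε).Nonempty ∧
      Bornology.IsBounded (F ⁻¹' Iio ε))
    (hlip : Filter.limsup
      (fun ε : ℝ =>
        relCap (F ⁻¹' Iio ε) (closure (F ⁻¹' Iio 0)) / ENNReal.ofReal ε)
      (𝓝[>] (0 : ℝ)) < ⊤) :
    ∃ γ T, IsPeriodicOrbit F γ T ∧ ∀ t, F (γ t) = 0 := by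
  obtain ⟨R, hR, hcap⟩ := exists_eventually_lt_ofReal_mul hlip
  obtain ⟨B, hB⟩ := exists_abs_deriv_smoothTransition_le
  have hP : 0 < 3 * B * R + 1 := by nlinarith [(abs_nonneg _).trans (hB 0)]
  set P := 3 * B * R + 1
  -- Periods are kept in `[P, 2P]` so that the limiting period is positive.
  have hnear : ∀ᶠ ε in 𝓝[>] 0, ∃ σ T, (∀ t, HasDerivAt σ (hamVF F (σ t)) t) ∧
      Periodic σ T ∧ T ∈ Icc P (2 * P) ∧ ∀ t, F (σ t) ∈ Ioc 0 ε := by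
    filter_upwards [hcap, Ioo_mem_nhdsGT hε₀] with ε hcapε ⟨hε, hεε₀⟩
    obtain ⟨σ, T, ⟨hT, hσ, hper, -⟩, hTP, hlev⟩ := exists_periodicOrbit_near_zero_level hsm hε hR
      hB (hsub 0 ⟨by linarith, hε₀.le⟩).1 (hsub ε ⟨by linarith, hεε₀.le⟩).2 hcapε
    obtain ⟨m, hm⟩ := exists_nat_mul_mem_Ioc (P := P) hT (by linarith)
    exact ⟨σ, m * T, hσ, (show Periodic σ T from hper).nat_mul m, Ioc_subset_Icc_self hm,
      fun t => ⟨by linarith [(hlev t).1], by linarith [(hlev t).2]⟩⟩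
  obtain ⟨δ, hδ, hδnear⟩ := mem_nhdsGT_iff_exists_Ioo_subset.1 hnear
  obtain ⟨ε, -, hε, hε0⟩ := exists_seq_strictAnti_tendsto' (lt_min hδ hε₀)
  choose σ T hσ hper hT hlev using fun k => hδnear ⟨(hε k).1, (hε k).2.trans_le (min_le_left _ _)⟩
  have hσK : ∀ k t, σ k t ∈ F ⁻¹' Icc (-ε₀) ε₀ := fun k t =>
    ⟨by linarith [(hlev k t).1], (hlev k t).2.trans ((hε k).2.le.trans (min_le_right _ _))⟩
  obtain ⟨γ, T₀, φ, hφ, hγ, hγper, hT₀, hlim⟩ := exists_periodic_limit_of_periodic_solutions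
    (contDiff_hamVF (hsm.of_le (WithTop.coe_le_coe.2 le_top))) (hproper _ isCompact_Icc)
    hσ hσK hper hT
  have hγS : ∀ t, F (γ t) = 0 := fun t =>
    tendsto_nhds_unique ((hsm.continuous.tendsto _).comp (hlim t)) <|
      squeeze_zero (fun _ => (hlev _ t).1.le) (fun _ => (hlev _ t).2) (hε0.comp hφ)
  exact ⟨γ, T₀, ⟨hP.trans_le hT₀.1, hγ, hγper,
    exists_ne_of_hasDerivAt_hamVF hγ (hreg 0 ⟨by linarith, hε₀.le⟩ _ (hγS 0))⟩, hγS⟩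

/-- **Proposition 5.5 of Ginzburg–Gürel** for regular level hypersurfaces in
standard `ℝ^{2n}`: if `S = F⁻¹(0)` is a regular level of a smooth proper
function `F`, with bounded nonempty sublevels `U_ε = {F < ε}` serving as a
thickening of `S`, and `S` has relative Lipschitz type, i.e.
`limsup_{ε → 0⁺} c_HZ(U_ε, Ū₀)/ε < ∞`, then `S` carries a closed
characteristic. -/
theorem stmt_16 (n : ℕ) (hn : 1 ≤ n) (F : Esp n → ℝ)
    (hsm : ContDiff ℝ (⊤ : ℕ∞) F)
    (hproper : ∀ s : Set ℝ, IsCompact s → IsCompact (F ⁻¹' s))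
    (ε₀ : ℝ) (hε₀ : 0 < ε₀)
    (hreg : ∀ c ∈ Icc (-ε₀) ε₀, ∀ x, F x = c → gradient F x ≠ 0)
    (hsub : ∀ ε ∈ Icc (-ε₀) ε₀, (F ⁻¹' Iio ε).Nonempty ∧
      Bornology.IsBounded (F ⁻¹' Iio ε))
    (hlip : Filter.limsup
      (fun ε : ℝ =>
        relCap (F ⁻¹' Iio ε) (closure (F ⁻¹' Iio 0)) / ENNReal.ofReal ε)
      (𝓝[>] (0 : ℝ)) < ⊤) :
    ∃ γ T, IsPeriodicOrbit F γ T ∧ ∀ t, F (γ t) = 0 :=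
  stmt_16_general n F hsm hproper ε₀ hε₀ hreg hsub hlip
end
end
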